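/- arXiv:1810.08902 — 2 statements merged into one kernel-verified Lean document; each statement's English description precedes it below -/
import Mathlib

section
/- Suppose |E| > 10 D³(log T)^{3σ}, and (j,n) ∈ ℤ² satisfies |j³ + C_V j − n/T − E| ≤ (log T)^σ, with |n/T| ≤ D(log T)^σ and |C_V| ≤ 2π(log T)^σ, where D > 2π, σ > 2, T ≥ T₀ sufficiently large. Then |j| ≥ 2D(log T)^σ. Moreover, if (j,n) and (j',n') both satisfy all the above constraints with |n|, |n'| ≤ DT(log T)^σ, then |j| = |j'| and |n − n'|/T ≤ 2(log T)^σ. -/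
open Real

set_option maxHeartbeats 800000 in
/-- **Structure of the resonant set for large eigenvalues.** Fix `D > 2π`, `σ > 2`.
For all sufficiently large `T`: if `|C_V| ≤ 2π(log T)^σ`, `|E| > 10D³(log T)^{3σ}`,
and `(j,n) ∈ ℤ²` satisfies the resonance condition `|j³ + C_V j − n/T − E| ≤ (log T)^σ`
with `|n| ≤ DT(log T)^σ`, then `|j| ≥ 2D(log T)^σ`; moreover if `(j,n)` and `(j',n')`
both satisfy these constraints then `|j| = |j'|` and `|n − n'|/T ≤ 2(log T)^σ`. -/
theorem resonant_set_structure (D σ : ℝ) (hD : 2 * π < D) (hσ : 2 < σ) :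
    ∃ T₀ : ℝ, ∀ T : ℝ, T₀ ≤ T →
      ∀ CV E : ℝ, |CV| ≤ 2 * π * (Real.log T) ^ σ →
        10 * D ^ 3 * (Real.log T) ^ (3 * σ) < |E| →
        (∀ j n : ℤ,
          |(j : ℝ) ^ 3 + CV * j - n / T - E| ≤ (Real.log T) ^ σ →
          |(n : ℝ)| ≤ D * T * (Real.log T) ^ σ →
          2 * D * (Real.log T) ^ σ ≤ |(j : ℝ)|) ∧
        (∀ j n j' n' : ℤ,
          |(j : ℝ) ^ 3 + CV * j - n / T - E| ≤ (Real.log T) ^ σ →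
          |(n : ℝ)| ≤ D * T * (Real.log T) ^ σ →
          |(j' : ℝ) ^ 3 + CV * j' - n' / T - E| ≤ (Real.log T) ^ σ →
          |(n' : ℝ)| ≤ D * T * (Real.log T) ^ σ →
          |j| = |j'| ∧ |(n : ℝ) - (n' : ℝ)| / T ≤ 2 * (Real.log T) ^ σ) := by
  refine ⟨3, fun T hT CV E hCV hE => ?_⟩
  have hT0 : (0:ℝ) < T := by linarith
  have hπ : (3:ℝ) < π := Real.pi_gt_three
  have hD6 : (6:ℝ) < D := by linarith
  have hlog : 1 ≤ Real.log T := by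
    rw [Real.le_log_iff_exp_le (by linarith)]
    have := Real.exp_one_lt_d9; linarith
  set L : ℝ := Real.log T ^ σ with hLdef
  have hL1 : 1 ≤ L := Real.one_le_rpow hlog (by linarith)
  have hDL : 6 ≤ D * L := by nlinarith
  have hLDL : L ≤ D * L := by nlinarith
  have hDL2 : D * L ≤ (D*L)^2 := by nlinarith [sq_nonneg (D*L - 1)]
  have hE3 : 10 * D ^ 3 * L ^ 3 < |E| := by
    have h3 : Real.log T ^ (3*σ) = L ^ 3 := by
      rw [hLdef, mul_comm, Real.rpow_mul (by linarith), show ((3:ℝ)) = ((3:ℕ):ℝ) by norm_num,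
        Real.rpow_natCast]
    rwa [h3] at hE
  -- bound on |n/T|
  have hu : ∀ n : ℤ, |(n : ℝ)| ≤ D * T * L → |(n : ℝ)/T| ≤ D * L := by
    intro n hn
    rw [abs_div, abs_of_pos hT0, div_le_iff₀ hT0]
    linarith [hn]
  -- Part 1 key
  have key : ∀ j n : ℤ, |(j : ℝ) ^ 3 + CV * j - n / T - E| ≤ L →
      |(n : ℝ)| ≤ D * T * L → 2 * D * L ≤ |(j : ℝ)| := by
    intro j n hres hn
    by_contra hcon
    push_neg at hcon
    have hun := hu n hn
    set x : ℝ := (j : ℝ)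
    set u : ℝ := (n : ℝ)/T
    have hx3 : |x ^ 3| ≤ 8 * D^3 * L^3 := by
      rw [abs_pow]
      calc |x|^3 ≤ (2*D*L)^3 := by
            apply pow_le_pow_left₀ (abs_nonneg x) (le_of_lt hcon)
        _ = 8 * D^3 * L^3 := by ring
    have hcvx : |CV * x| ≤ 2*π*L*(2*D*L) := by
      rw [abs_mul]
      apply mul_le_mul hCV (le_of_lt hcon) (abs_nonneg x)
      positivity
    have hEle : |E| ≤ |x^3| + |CV*x| + |u| + |x ^ 3 + CV * x - u - E| := by
      have h1 := abs_add_le (x^3 + CV*x + -u) (-(x ^ 3 + CV * x - u - E))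
      have h2 := abs_add_le (x^3 + CV*x) (-u)
      have h3 := abs_add_le (x^3) (CV*x)
      rw [abs_neg] at h1 h2
      have he : E = x^3 + CV*x + -u + -(x ^ 3 + CV * x - u - E) := by ring
      rw [← he] at h1
      linarith
    have hpi2 : 2 * π * L * (2*D*L) ≤ 2 * D^2 * L^2 := by
      nlinarith [mul_nonneg (by linarith : (0:ℝ) ≤ D - 2*π)
        (by nlinarith : (0:ℝ) ≤ 2*D*L^2)]
    have hbig : 2 * D^2 * L^2 + D*L + L ≤ 2 * D^3 * L^3 := by
      nlinarith [mul_nonneg (by linarith : (0:ℝ) ≤ D*L - 6) (sq_nonneg (D*L)), hDL2, hLDL]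
    linarith
  refine ⟨key, ?_⟩
  intro j n j' n' hres hn hres' hn'
  have hj := key j n hres hn
  have hj' := key j' n' hres' hn'
  have hun := hu n hn
  have hun' := hu n' hn'
  have hjj : j = j' := by
    by_contra hne
    have hd1 : (1:ℝ) ≤ |(j:ℝ) - (j':ℝ)| := by
      have h := Int.one_le_abs (sub_ne_zero.mpr hne)
      exact_mod_cast h
    set x : ℝ := (j : ℝ)
    set x' : ℝ := (j' : ℝ)
    have h2DL : (0:ℝ) ≤ 2*D*L := by nlinarith
    have hx2 : (2*D*L)^2 ≤ x^2 := by
      nlinarith [mul_le_mul hj hj h2DL (abs_nonneg x), sq_abs x]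
    have hx'2 : (2*D*L)^2 ≤ x'^2 := by
      nlinarith [mul_le_mul hj' hj' h2DL (abs_nonneg x'), sq_abs x']
    -- difference bound
    have hdiff : |(x - x') * (x^2 + x*x' + x'^2 + CV)| ≤ 2*L + 2*D*L := by
      have he : (x - x') * (x^2 + x*x' + x'^2 + CV)
          = (x ^ 3 + CV * x - (n:ℝ)/T - E) - (x' ^ 3 + CV * x' - (n':ℝ)/T - E)
            + ((n:ℝ)/T - (n':ℝ)/T) := by ring
      rw [he]
      have h1 := abs_add_le ((x ^ 3 + CV * x - (n:ℝ)/T - E) - (x' ^ 3 + CV * x' - (n':ℝ)/T - E))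
        ((n:ℝ)/T - (n':ℝ)/T)
      have h2 := abs_sub (x ^ 3 + CV * x - (n:ℝ)/T - E) (x' ^ 3 + CV * x' - (n':ℝ)/T - E)
      have h3 := abs_sub ((n:ℝ)/T) ((n':ℝ)/T)
      linarith
    -- the quadratic factor is large
    have hcvlow : -(D*L) ≤ CV := by
      have := (abs_le.mp hCV).1
      nlinarith
    have hq : 2 * D^2 * L^2 ≤ x^2 + x*x' + x'^2 + CV := by
      nlinarith [sq_nonneg (2*x + x'), hx'2, hcvlow, hDL2]
    have hq0 : (0:ℝ) ≤ x^2 + x*x' + x'^2 + CV := by nlinarith [hq, sq_nonneg (D*L)]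
    have habs : |(x - x') * (x^2 + x*x' + x'^2 + CV)| =
        |x - x'| * (x^2 + x*x' + x'^2 + CV) := by
      rw [abs_mul, abs_of_nonneg hq0]
    rw [habs] at hdiff
    have hge := mul_le_mul_of_nonneg_right hd1 hq0
    rw [one_mul] at hge
    have hsq : 6*(D*L) ≤ D^2*L^2 := by
      nlinarith [mul_nonneg (by linarith : (0:ℝ) ≤ D*L - 6) (by linarith : (0:ℝ) ≤ D*L)]
    linarith [hge, hdiff, hq, hsq, hLDL, hDL]
  subst hjj
  refine ⟨rfl, ?_⟩
  have he : (n:ℝ)/T - (n':ℝ)/T =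
      ((j : ℝ) ^ 3 + CV * j - (n':ℝ)/T - E) - ((j : ℝ) ^ 3 + CV * j - (n:ℝ)/T - E) := by ring
  have h2 := abs_sub ((j : ℝ) ^ 3 + CV * j - (n':ℝ)/T - E) ((j : ℝ) ^ 3 + CV * j - (n:ℝ)/T - E)
  rw [← he] at h2
  have hre : |(n : ℝ) - (n' : ℝ)| / T = |(n:ℝ)/T - (n':ℝ)/T| := by
    rw [show (n:ℝ)/T - (n':ℝ)/T = ((n:ℝ) - (n':ℝ))/T by ring, abs_div, abs_of_pos hT0]
  rw [hre]
  linarith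
end

section
/- Let V₁(x,t) be 2π-periodic in x and 2πT-periodic in t with Fourier coefficients satisfying |V̂₁(j,n)| ≤ C e^{−c|j|} for |j| ≥ (log T)^δ and |V̂₁(j,n)| ≤ C e^{−c|n/T|^{1/α}} for |n| ≥ T(log T)^δ, where α > 1, δ > 0. Define V₂ as the Fourier truncation of V₁ to |j| ≤ (log T)^σ, |n| ≤ T(log T)^σ with σ > 2α + δ. Then ‖V₁ − V₂‖_∞ ≤ e^{−(log T)^{σ'/α}} for any σ' with 2α+δ < σ' < σ and T sufficiently large. -/
open Real

-- w^2 * exp(-w) ≤ 4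
lemma aux_sq_exp (w : ℝ) (hw : 0 ≤ w) : w^2 * Real.exp (-w) ≤ 4 := by
  have h1 : w/2 ≤ Real.exp (w/2) := le_trans (by linarith) (Real.add_one_le_exp (w/2))
  have h2 : (w/2)^2 ≤ (Real.exp (w/2))^2 := pow_le_pow_left₀ (by linarith) h1 2
  have h3 : (Real.exp (w/2))^2 = Real.exp w := by
    rw [sq, ← Real.exp_add]; ring_nf
  have h7 : Real.exp w * Real.exp (-w) = 1 := by rw [← Real.exp_add]; simp
  have h4 : w^2 ≤ 4 * Real.exp w := by nlinarith
  nlinarith [Real.exp_pos (-w), Real.exp_pos w]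

-- exponential dominated by inverse square, uniform version
lemma aux_exp_le (q u : ℝ) (hq : 0 < q) (hu : 0 ≤ u) :
    Real.exp (-(q*u)) ≤ (8 / min (q^2) 1) * (1/(u^2+1)) := by
  have hmin : 0 < min (q^2) 1 := lt_min (by positivity) one_pos
  have hu1 : (0:ℝ) < u^2 + 1 := by positivity
  rw [div_mul_div_comm, mul_one, le_div_iff₀ (by positivity)]
  have hkey : min (q^2) 1 * (u^2+1) ≤ q^2*u^2 + 1 := by
    have h1 : min (q^2) 1 ≤ q^2 := min_le_left _ _
    have h2 : min (q^2) 1 ≤ 1 := min_le_right _ _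
    nlinarith [sq_nonneg u]
  have hmain : Real.exp (-(q*u)) * (q^2*u^2+1) ≤ 8 := by
    have hqu : 0 ≤ q*u := by positivity
    have he1 : Real.exp (-(q*u)) ≤ 1 := Real.exp_le_one_iff.mpr (by linarith)
    have hsq := aux_sq_exp (q*u) hqu
    rcases le_total (q*u) 1 with h | h
    · nlinarith [Real.exp_pos (-(q*u))]
    · have : q^2*u^2 = (q*u)^2 := by ring
      nlinarith [Real.exp_pos (-(q*u))]
  calc Real.exp (-(q*u)) * (min (q^2) 1 * (u^2+1)) ≤ Real.exp (-(q*u)) * (q^2*u^2+1) := by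
        apply mul_le_mul_of_nonneg_left hkey (Real.exp_pos _).le
    _ ≤ 8 := hmain

-- Gevrey factor dominated by inverse square
lemma aux_gevrey (q α T w : ℝ) (hq : 0 < q) (hα : 1 < α) (hT : 1 ≤ T) (hw : 0 ≤ w) :
    Real.exp (-(q * (w/T)^(1/α))) ≤
      (2 + 2*Real.exp (2*α*Real.log (4*α/q))) * (T^2 * (1/(w^2+1))) := by
  have hT0 : 0 < T := lt_of_lt_of_le one_pos hT
  have hα0 : 0 < α := by linarith
  set K₀ := Real.exp (2*α*Real.log (4*α/q)) with hK₀
  have hK₀0 : 0 < K₀ := Real.exp_pos _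
  have hw1 : (0:ℝ) < w^2+1 := by positivity
  have key : Real.exp (-(q * (w/T)^(1/α))) * (w^2+1) ≤ (2 + 2*K₀) * T^2 := by
    rcases le_total w T with h | h
    · have he1 : Real.exp (-(q * (w/T)^(1/α))) ≤ 1 := by
        apply Real.exp_le_one_iff.mpr
        have : (0:ℝ) ≤ (w/T)^(1/α) := Real.rpow_nonneg (by positivity) _
        nlinarith
      nlinarith [sq_nonneg w, sq_nonneg T]
    · -- T ≤ w
      set x := w/T with hx
      have hx1 : 1 ≤ x := (one_le_div hT0).mpr h
      have hx0 : 0 < x := lt_of_lt_of_le one_pos hx1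
      set y := x^(1/α) with hy
      have hy1 : 1 ≤ y := Real.one_le_rpow hx1 (by positivity)
      have hy0 : 0 < y := lt_of_lt_of_le one_pos hy1
      have hxy : x = y^α := by
        rw [hy, ← Real.rpow_mul hx0.le, one_div, inv_mul_cancel₀ hα0.ne', Real.rpow_one]
      have hx2 : x^2 = Real.exp (2*α*Real.log y) := by
        have h0 : x^2 = y^(α*(2:ℕ)) := by
          rw [hxy, Real.rpow_mul hy0.le, Real.rpow_natCast]
        rw [h0, Real.rpow_def_of_pos hy0]; norm_num; ring_nf
      have hlog1 : Real.log (q*y/(4*α)) ≤ q*y/(4*α) - 1 :=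
        Real.log_le_sub_one_of_pos (by positivity)
      have hlog2 : Real.log (q*y/(4*α)) = Real.log y - Real.log (4*α/q) := by
        rw [← Real.log_div hy0.ne' (by positivity : (4*α/q) ≠ 0)]
        congr 1
        field_simp
      have h5 : 2*α*Real.log y ≤ 2*α*(q*y/(4*α) - 1 + Real.log (4*α/q)) := by
        apply mul_le_mul_of_nonneg_left _ (by positivity)
        linarith
      have h6 : 2*α*(q*y/(4*α) - 1 + Real.log (4*α/q))
          = q*y/2 - 2*α + 2*α*Real.log (4*α/q) := by
        have : 2*α*(q*y/(4*α)) = q*y/2 := by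
          field_simp
          ring
        linarith [this, mul_add (2*α) (q*y/(4*α) - 1) (Real.log (4*α/q)),
          mul_sub (2*α) (q*y/(4*α)) 1]
      have hqy : 0 ≤ q*y := by positivity
      have hlogy : 2*α*Real.log y ≤ q*y + 2*α*Real.log (4*α/q) := by
        rw [h6] at h5; linarith
      have hexy : Real.exp (-(q*y)) * x^2 ≤ K₀ := by
        rw [hx2, ← Real.exp_add, hK₀]
        apply Real.exp_le_exp.mpr
        linarith
      have hw2 : w^2 + 1 ≤ 2*(T^2*x^2) := by
        have hwtx : w = T*x := by rw [hx, mul_div_cancel₀ _ hT0.ne']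
        have hww : 1 ≤ w := le_trans hT h
        nlinarith
      have hE : 0 < Real.exp (-(q*y)) := Real.exp_pos _
      calc Real.exp (-(q * (w/T)^(1/α))) * (w^2+1)
          = Real.exp (-(q*y)) * (w^2+1) := by rw [hy, hx]
        _ ≤ Real.exp (-(q*y)) * (2*(T^2*x^2)) := by
            apply mul_le_mul_of_nonneg_left hw2 hE.le
        _ = 2*T^2*(Real.exp (-(q*y)) * x^2) := by ring
        _ ≤ 2*T^2*K₀ := by nlinarith
        _ ≤ (2 + 2*K₀) * T^2 := by nlinarith
  calc Real.exp (-(q * (w/T)^(1/α)))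
      = Real.exp (-(q * (w/T)^(1/α))) * (w^2+1) * (1/(w^2+1)) := by field_simp
    _ ≤ (2 + 2*K₀) * T^2 * (1/(w^2+1)) := by
        apply mul_le_mul_of_nonneg_right key (by positivity)
    _ = (2 + 2*K₀) * (T^2 * (1/(w^2+1))) := by ring

lemma aux_ineq (a : ℝ) (ha : 0 ≤ a) : 1/(a^2+1) ≤ 4 * (1/((a+1)^2)) := by
  rw [mul_one_div, div_le_div_iff₀ (by positivity) (by positivity)]
  nlinarith [sq_nonneg (a-1), sq_nonneg a]

lemma aux_nat_sum : Summable (fun n:ℕ => 1/(((n:ℝ)+1)^2)) ∧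
    (∑' n:ℕ, 1/(((n:ℝ)+1)^2)) ≤ 3 := by
  have hs0 := hasSum_zeta_two.summable
  have hs : Summable (fun n:ℕ => 1/(((n:ℝ)+1)^2)) := by
    have := (summable_nat_add_iff (f := fun n:ℕ => (1:ℝ)/((n:ℝ))^2) 1).mpr hs0
    exact this.congr (fun n => by push_cast; ring)
  refine ⟨hs, ?_⟩
  have h1 : (∑' n:ℕ, (1:ℝ)/((n:ℝ))^2) = 1/((0:ℕ):ℝ)^2 + ∑' n:ℕ, 1/(((n+1:ℕ):ℝ))^2 :=
    Summable.tsum_eq_zero_add hs0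
  have h2 : (∑' n:ℕ, 1/(((n+1:ℕ):ℝ))^2) = ∑' n:ℕ, 1/(((n:ℝ)+1)^2) :=
    tsum_congr (fun n => by push_cast; ring)
  have hpi : Real.pi^2/6 ≤ 3 := by nlinarith [Real.pi_le_four, Real.pi_pos]
  rw [hasSum_zeta_two.tsum_eq, h2] at h1
  norm_num at h1
  simp only [one_div] at h1 ⊢
  linarith

lemma aux_int_sum : Summable (fun n:ℤ => 1/(((n:ℝ))^2+1)) ∧
    (∑' n:ℤ, 1/(((n:ℝ))^2+1)) ≤ 24 := by
  obtain ⟨hs, hb⟩ := aux_nat_sum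
  set f : ℤ → ℝ := fun n => 1/(((n:ℝ))^2+1) with hf
  have hle1 : ∀ n:ℕ, f (n:ℤ) ≤ 4 * (1/(((n:ℝ)+1)^2)) := by
    intro n
    have := aux_ineq (n:ℝ) (by positivity)
    simpa [hf] using this
  have hle2 : ∀ n:ℕ, f (-((n:ℤ)+1)) ≤ 4 * (1/(((n:ℝ)+1)^2)) := by
    intro n
    have h1 : f (-((n:ℤ)+1)) = 1/(((n:ℝ)+1)^2+1) := by
      rw [hf]; push_cast; ring_nf
    rw [h1]
    have h3 : (0:ℝ) < ((n:ℝ)+1)^2 := by positivity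
    have h4 : 1/(((n:ℝ)+1)^2+1) ≤ 1/(((n:ℝ)+1)^2) :=
      one_div_le_one_div_of_le h3 (by linarith)
    have h5 : (0:ℝ) ≤ 1/(((n:ℝ)+1)^2) := by positivity
    linarith
  have hpos : ∀ m:ℤ, 0 ≤ f m := fun m => by positivity
  have hs4 : Summable (fun n:ℕ => 4 * (1/(((n:ℝ)+1)^2))) := hs.mul_left 4
  have hsn : Summable (fun n:ℕ => f (n:ℤ)) :=
    Summable.of_nonneg_of_le (fun n => hpos _) hle1 hs4
  have hsm : Summable (fun n:ℕ => f (-((n:ℤ)+1))) :=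
    Summable.of_nonneg_of_le (fun n => hpos _) hle2 hs4
  have hsZ : Summable f := Summable.of_nat_of_neg_add_one hsn hsm
  refine ⟨hsZ, ?_⟩
  have ht : (∑' n:ℤ, f n) = (∑' n:ℕ, f (n:ℤ)) + ∑' n:ℕ, f (-((n:ℤ)+1)) := by
    have := tsum_of_nat_of_neg_add_one hsn hsm
    simpa using this
  have hb4 : (∑' n:ℕ, 4 * (1/(((n:ℝ)+1)^2))) = 4 * ∑' n:ℕ, (1/(((n:ℝ)+1)^2)) := tsum_mul_left
  have h5 : (∑' n:ℕ, f (n:ℤ)) ≤ 12 := by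
    calc (∑' n:ℕ, f (n:ℤ)) ≤ ∑' n:ℕ, 4 * (1/(((n:ℝ)+1)^2)) := Summable.tsum_le_tsum hle1 hsn hs4
      _ = 4 * ∑' n:ℕ, (1/(((n:ℝ)+1)^2)) := hb4
      _ ≤ 12 := by linarith
  have h6 : (∑' n:ℕ, f (-((n:ℤ)+1))) ≤ 12 := by
    calc (∑' n:ℕ, f (-((n:ℤ)+1))) ≤ ∑' n:ℕ, 4 * (1/(((n:ℝ)+1)^2)) := Summable.tsum_le_tsum hle2 hsm hs4
      _ = 4 * ∑' n:ℕ, (1/(((n:ℝ)+1)^2)) := hb4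
      _ ≤ 12 := by linarith
  rw [hf] at ht ⊢
  rw [ht]
  linarith

lemma aux_min_combine (C c a b V : ℝ) (hC : 0 ≤ C) (hc : 0 < c)
    (h1 : V ≤ C * Real.exp (-(c*a))) (h2 : V ≤ C * Real.exp (-(c*b))) :
    V ≤ C * Real.exp (-(c/2*(a+b))) := by
  rcases le_total a b with h | h
  · refine h2.trans (mul_le_mul_of_nonneg_left (Real.exp_le_exp.mpr ?_) hC)
    nlinarith
  · refine h1.trans (mul_le_mul_of_nonneg_left (Real.exp_le_exp.mpr ?_) hC)
    nlinarith
lemma aux_pointwise (C c α δ σ T L V u m : ℝ)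
    (hC : 0 < C) (hc : 0 < c) (hα : 1 < α) (hδ : 0 < δ) (hδσ : δ ≤ σ)
    (hT : 1 ≤ T) (hL : 1 ≤ L) (hu0 : 0 ≤ u) (hm0 : 0 ≤ m) (hV0 : 0 ≤ V)
    (hju : L^δ ≤ u → V ≤ C * Real.exp (-(c*u)))
    (hnm : T*L^δ ≤ m → V ≤ C * Real.exp (-(c*((m/T)^(1/α)))))
    (hbig : L^σ < u ∨ T*L^σ < m) :
    V ≤ C * (2*(8/min ((c/2)^2) 1) + 2*(2 + 2*Real.exp (2*α*Real.log (4*α/(c/2))))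
          + (8/min ((c/4)^2) 1)*(2 + 2*Real.exp (2*α*Real.log (4*α/(c/4)))))
        * (T*L^δ)^2 * Real.exp (-(c/4*L^(σ/α)))
        * ((1/(u^2+1)) * (1/(m^2+1))) := by
  have hα0 : 0 < α := by linarith
  have hσ0 : 0 ≤ σ := le_trans hδ.le hδσ
  have hT0 : 0 < T := by linarith
  have hL0 : 0 < L := by linarith
  set κ₂ : ℝ := 8 / min ((c/2)^2) 1 with hκ₂def
  set κ₄ : ℝ := 8 / min ((c/4)^2) 1 with hκ₄def
  set K₂ : ℝ := 2 + 2*Real.exp (2*α*Real.log (4*α/(c/2))) with hK₂def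
  set K₄ : ℝ := 2 + 2*Real.exp (2*α*Real.log (4*α/(c/4))) with hK₄def
  have hκ₂0 : 0 < κ₂ := div_pos (by norm_num) (lt_min (by positivity) one_pos)
  have hκ₄0 : 0 < κ₄ := div_pos (by norm_num) (lt_min (by positivity) one_pos)
  have hK₂0 : 0 < K₂ := by positivity
  have hK₄0 : 0 < K₄ := by positivity
  set D : ℝ := 2*κ₂ + 2*K₂ + κ₄*K₄ with hDdef
  have hκK : 0 < κ₄*K₄ := mul_pos hκ₄0 hK₄0
  have hD1 : 2*κ₂ ≤ D := by rw [hDdef]; linarith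
  have hD2 : 2*K₂ ≤ D := by rw [hDdef]; linarith
  have hD3 : κ₄*K₄ ≤ D := by rw [hDdef]; linarith
  set fu : ℝ := 1/(u^2+1) with hfudef
  set fm : ℝ := 1/(m^2+1) with hfmdef
  have hfu0 : 0 < fu := by positivity
  have hfm0 : 0 < fm := by positivity
  have hLδ1 : 1 ≤ L^δ := Real.one_le_rpow hL hδ.le
  have hLδσ : L^δ ≤ L^σ := Real.rpow_le_rpow_of_exponent_le hL hδσ
  have hLσα0 : 0 < L^(σ/α) := Real.rpow_pos_of_pos hL0 _
  have hLσασ : L^(σ/α) ≤ L^σ :=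
    Real.rpow_le_rpow_of_exponent_le hL (div_le_self hσ0 hα.le)
  have hTL1 : 1 ≤ T*L^δ := by
    have := mul_le_mul hT hLδ1 zero_le_one (by positivity : (0:ℝ) ≤ T)
    linarith
  set v : ℝ := (m/T)^(1/α) with hvdef
  have hv0 : 0 ≤ v := Real.rpow_nonneg (by positivity) _
  -- goal shape
  rcases hbig with hbu | hbm
  · -- |j| big
    have hju' : L^δ ≤ u := le_trans hLδσ hbu.le
    have hVj := hju hju'
    rcases le_or_gt m (T*L^δ) with hms | hml
    · -- Region 1
      have hsplit : Real.exp (-(c*u)) = Real.exp (-(c/2*u)) * Real.exp (-(c/2*u)) := by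
        rw [← Real.exp_add]; ring_nf
      have h1 : Real.exp (-(c/2*u)) ≤ Real.exp (-(c/2*L^σ)) :=
        Real.exp_le_exp.mpr (neg_le_neg
          (mul_le_mul_of_nonneg_left hbu.le (by positivity)))
      have h2 : Real.exp (-(c/2*u)) ≤ κ₂ * fu := aux_exp_le (c/2) u (by positivity) hu0
      have h3 : (1:ℝ) ≤ 2*(T*L^δ)^2 * fm := by
        have hn2 : m^2 + 1 ≤ 2*(T*L^δ)^2 := by
          have a := pow_le_pow_left₀ hm0 hms 2
          have b := one_le_pow₀ hTL1 (n := 2)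
          linarith
        calc (1:ℝ) = (m^2+1) * fm := by rw [hfmdef]; field_simp
          _ ≤ 2*(T*L^δ)^2 * fm := mul_le_mul_of_nonneg_right hn2 hfm0.le
      have h4 : Real.exp (-(c/2*L^σ)) ≤ Real.exp (-(c/4*L^(σ/α))) :=
        Real.exp_le_exp.mpr (neg_le_neg
          (mul_le_mul (by linarith) hLσασ hLσα0.le (by positivity)))
      calc V ≤ C * Real.exp (-(c*u)) := hVj
        _ = C * (Real.exp (-(c/2*u)) * Real.exp (-(c/2*u))) * 1 := by rw [hsplit, mul_one]
        _ ≤ C * (Real.exp (-(c/2*L^σ)) * (κ₂ * fu)) * (2*(T*L^δ)^2 * fm) := by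
            apply mul_le_mul ?_ h3 (by norm_num) (by positivity)
            apply mul_le_mul_of_nonneg_left ?_ hC.le
            exact mul_le_mul h1 h2 (Real.exp_pos _).le (Real.exp_pos _).le
        _ = C * (2*κ₂) * (T*L^δ)^2 * Real.exp (-(c/2*L^σ)) * (fu*fm) := by ring
        _ ≤ C * D * (T*L^δ)^2 * Real.exp (-(c/4*L^(σ/α))) * (fu*fm) := by
            apply mul_le_mul_of_nonneg_right ?_ (by positivity)
            apply mul_le_mul ?_ h4 (Real.exp_pos _).le (by positivity)
            apply mul_le_mul_of_nonneg_right ?_ (by positivity)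
            exact mul_le_mul_of_nonneg_left hD1 hC.le
    · -- Region 3
      have hVn := hnm (le_of_lt hml)
      have hmix : V ≤ C * Real.exp (-(c/2*(u+v))) :=
        aux_min_combine C c u v V hC.le hc hVj hVn
      have hlow : L^(σ/α) ≤ u + v := by
        have : L^(σ/α) ≤ u := le_trans hLσασ hbu.le
        linarith
      have hsplit : Real.exp (-(c/2*(u+v)))
          = Real.exp (-(c/4*(u+v))) * Real.exp (-(c/4*u)) * Real.exp (-(c/4*v)) := by
        rw [← Real.exp_add, ← Real.exp_add]; ring_nf
      have h1 : Real.exp (-(c/4*(u+v))) ≤ Real.exp (-(c/4*L^(σ/α))) :=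
        Real.exp_le_exp.mpr (neg_le_neg
          (mul_le_mul_of_nonneg_left hlow (by positivity)))
      have h2 : Real.exp (-(c/4*u)) ≤ κ₄ * fu := aux_exp_le (c/4) u (by positivity) hu0
      have h3 : Real.exp (-(c/4*v)) ≤ K₄ * (T^2 * fm) := aux_gevrey (c/4) α T m (by positivity) hα hT hm0
      have hTT : T^2 ≤ (T*L^δ)^2 :=
        pow_le_pow_left₀ hT0.le (le_mul_of_one_le_right hT0.le hLδ1) 2
      calc V ≤ C * Real.exp (-(c/2*(u+v))) := hmix
        _ = C * (Real.exp (-(c/4*(u+v))) * Real.exp (-(c/4*u)) * Real.exp (-(c/4*v))) := by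
            rw [hsplit]
        _ ≤ C * (Real.exp (-(c/4*L^(σ/α))) * (κ₄ * fu) * (K₄ * (T^2 * fm))) := by
            apply mul_le_mul_of_nonneg_left ?_ hC.le
            apply mul_le_mul ?_ h3 (Real.exp_pos _).le (by positivity)
            exact mul_le_mul h1 h2 (Real.exp_pos _).le (Real.exp_pos _).le
        _ = C * (κ₄*K₄) * T^2 * Real.exp (-(c/4*L^(σ/α))) * (fu*fm) := by ring
        _ ≤ C * D * (T*L^δ)^2 * Real.exp (-(c/4*L^(σ/α))) * (fu*fm) := by
            apply mul_le_mul_of_nonneg_right ?_ (by positivity)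
            apply mul_le_mul_of_nonneg_right ?_ (Real.exp_pos _).le
            apply mul_le_mul ?_ hTT (by positivity) (by positivity)
            exact mul_le_mul_of_nonneg_left hD3 hC.le
  · -- |n| big
    have hnm' : T*L^δ ≤ m := by
      have := mul_le_mul_of_nonneg_left hLδσ hT0.le
      linarith
    have hVn := hnm hnm'
    have hvlow : L^(σ/α) ≤ v := by
      have h1 : L^σ ≤ m/T := (le_div_iff₀ hT0).mpr (by linarith)
      have h2 : (L^σ)^(1/α) ≤ (m/T)^(1/α) :=
        Real.rpow_le_rpow (by positivity) h1 (by positivity)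
      have h3 : (L^σ)^(1/α) = L^(σ/α) := by
        rw [← Real.rpow_mul hL0.le, mul_one_div]
      rw [hvdef]; rw [h3] at h2; exact h2
    rcases le_or_gt u (L^δ) with hus | hul
    · -- Region 2
      have hsplit : Real.exp (-(c*v)) = Real.exp (-(c/2*v)) * Real.exp (-(c/2*v)) := by
        rw [← Real.exp_add]; ring_nf
      have h1 : Real.exp (-(c/2*v)) ≤ Real.exp (-(c/4*L^(σ/α))) :=
        Real.exp_le_exp.mpr (neg_le_neg
          (mul_le_mul (by linarith) hvlow hLσα0.le (by positivity)))
      have h2 : Real.exp (-(c/2*v)) ≤ K₂ * (T^2 * fm) := aux_gevrey (c/2) α T m (by positivity) hα hT hm0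
      have h3 : (1:ℝ) ≤ 2*(L^δ)^2 * fu := by
        have hn2 : u^2 + 1 ≤ 2*(L^δ)^2 := by
          have a := pow_le_pow_left₀ hu0 hus 2
          have b := one_le_pow₀ hLδ1 (n := 2)
          linarith
        calc (1:ℝ) = (u^2+1) * fu := by rw [hfudef]; field_simp
          _ ≤ 2*(L^δ)^2 * fu := mul_le_mul_of_nonneg_right hn2 hfu0.le
      calc V ≤ C * Real.exp (-(c*v)) := hVn
        _ = C * (Real.exp (-(c/2*v)) * Real.exp (-(c/2*v))) * 1 := by rw [hsplit, mul_one]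
        _ ≤ C * (Real.exp (-(c/4*L^(σ/α))) * (K₂ * (T^2 * fm))) * (2*(L^δ)^2 * fu) := by
            apply mul_le_mul ?_ h3 (by norm_num) (by positivity)
            apply mul_le_mul_of_nonneg_left ?_ hC.le
            exact mul_le_mul h1 h2 (Real.exp_pos _).le (Real.exp_pos _).le
        _ = C * (2*K₂) * ((L^δ)^2*T^2) * Real.exp (-(c/4*L^(σ/α))) * (fu*fm) := by ring
        _ ≤ C * D * (T*L^δ)^2 * Real.exp (-(c/4*L^(σ/α))) * (fu*fm) := by
            apply mul_le_mul_of_nonneg_right ?_ (by positivity)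
            apply mul_le_mul_of_nonneg_right ?_ (Real.exp_pos _).le
            apply mul_le_mul ?_ (le_of_eq (by ring)) (by positivity) (by positivity)
            exact mul_le_mul_of_nonneg_left hD2 hC.le
    · -- Region 3
      have hVj := hju (le_of_lt hul)
      have hmix : V ≤ C * Real.exp (-(c/2*(u+v))) :=
        aux_min_combine C c u v V hC.le hc hVj hVn
      have hlow : L^(σ/α) ≤ u + v := by linarith
      have hsplit : Real.exp (-(c/2*(u+v)))
          = Real.exp (-(c/4*(u+v))) * Real.exp (-(c/4*u)) * Real.exp (-(c/4*v)) := by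
        rw [← Real.exp_add, ← Real.exp_add]; ring_nf
      have h1 : Real.exp (-(c/4*(u+v))) ≤ Real.exp (-(c/4*L^(σ/α))) :=
        Real.exp_le_exp.mpr (neg_le_neg
          (mul_le_mul_of_nonneg_left hlow (by positivity)))
      have h2 : Real.exp (-(c/4*u)) ≤ κ₄ * fu := aux_exp_le (c/4) u (by positivity) hu0
      have h3 : Real.exp (-(c/4*v)) ≤ K₄ * (T^2 * fm) := aux_gevrey (c/4) α T m (by positivity) hα hT hm0
      have hTT : T^2 ≤ (T*L^δ)^2 :=
        pow_le_pow_left₀ hT0.le (le_mul_of_one_le_right hT0.le hLδ1) 2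
      calc V ≤ C * Real.exp (-(c/2*(u+v))) := hmix
        _ = C * (Real.exp (-(c/4*(u+v))) * Real.exp (-(c/4*u)) * Real.exp (-(c/4*v))) := by
            rw [hsplit]
        _ ≤ C * (Real.exp (-(c/4*L^(σ/α))) * (κ₄ * fu) * (K₄ * (T^2 * fm))) := by
            apply mul_le_mul_of_nonneg_left ?_ hC.le
            apply mul_le_mul ?_ h3 (Real.exp_pos _).le (by positivity)
            exact mul_le_mul h1 h2 (Real.exp_pos _).le (Real.exp_pos _).le
        _ = C * (κ₄*K₄) * T^2 * Real.exp (-(c/4*L^(σ/α))) * (fu*fm) := by ring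
        _ ≤ C * D * (T*L^δ)^2 * Real.exp (-(c/4*L^(σ/α))) * (fu*fm) := by
            apply mul_le_mul_of_nonneg_right ?_ (by positivity)
            apply mul_le_mul_of_nonneg_right ?_ (Real.exp_pos _).le
            apply mul_le_mul ?_ hTT (by positivity) (by positivity)
            exact mul_le_mul_of_nonneg_left hD3 hC.le


lemma aux_final (c α δ σ σ' E L : ℝ) (hc : 0 < c) (hα : 1 < α) (hδ : 0 < δ)
    (hσ' : 2*α + δ < σ') (hσ : σ' < σ) (hL1 : 1 ≤ L)
    (hLR : (max ((4/c)*(|E|+3+2*δ)) 1)^(α/(σ-σ')) ≤ L) :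
    E + (2+2*δ)*L + L^(σ'/α) ≤ c/4*L^(σ/α) := by
  have hα0 : 0 < α := by linarith
  have hσσ' : 0 < σ - σ' := by linarith
  have hL0 : 0 < L := by linarith
  set A : ℝ := |E|+3+2*δ with hAdef
  have hA0 : 0 < A := by have := abs_nonneg E; rw [hAdef]; linarith
  set R : ℝ := (4/c)*A with hRdef
  have hR0 : 0 ≤ R := by positivity
  have hM0 : (0:ℝ) ≤ max R 1 := le_trans zero_le_one (le_max_right _ _)
  -- step 1
  have step1 : max R 1 ≤ L^((σ-σ')/α) := by
    have h := Real.rpow_le_rpow (Real.rpow_nonneg hM0 _) hLR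
      (div_nonneg hσσ'.le hα0.le)
    rwa [← Real.rpow_mul hM0,
      show (α/(σ-σ'))*((σ-σ')/α) = 1 by field_simp, Real.rpow_one] at h
  -- step 2
  have step2 : A ≤ c/4 * L^((σ-σ')/α) := by
    have h1 : R ≤ max R 1 := le_max_left _ _
    have h2 : c/4 * R = A := by rw [hRdef]; field_simp
    have h3 : c/4 * max R 1 ≤ c/4 * L^((σ-σ')/α) :=
      mul_le_mul_of_nonneg_left step1 (by positivity)
    have h4 : c/4 * R ≤ c/4 * max R 1 := mul_le_mul_of_nonneg_left h1 (by positivity)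
    linarith
  -- step 3
  have step3 : L^(σ/α) = L^(σ'/α) * L^((σ-σ')/α) := by
    rw [← Real.rpow_add hL0]
    congr 1
    ring
  -- step 4
  have hLle : L ≤ L^(σ'/α) := by
    have := Real.rpow_le_rpow_of_exponent_le hL1
      (show (1:ℝ) ≤ σ'/α from (one_le_div hα0).mpr (by linarith))
    rwa [Real.rpow_one] at this
  have h1L : 1 ≤ L^(σ'/α) := le_trans hL1 hLle
  have hX0 : 0 ≤ L^(σ'/α) := by linarith
  have hE : E ≤ |E| := le_abs_self _
  have e1 : |E| ≤ |E| * L^(σ'/α) := le_mul_of_one_le_right (abs_nonneg E) h1L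
  have e2 : (2+2*δ)*L ≤ (2+2*δ)*L^(σ'/α) :=
    mul_le_mul_of_nonneg_left hLle (by linarith)
  have e3 : A * L^(σ'/α) ≤ (c/4 * L^((σ-σ')/α)) * L^(σ'/α) :=
    mul_le_mul_of_nonneg_right step2 hX0
  have e4 : (c/4 * L^((σ-σ')/α)) * L^(σ'/α) = c/4*L^(σ/α) := by
    rw [step3]; ring
  have e5 : A * L^(σ'/α) = |E| * L^(σ'/α) + (2+2*δ)*L^(σ'/α) + L^(σ'/α) := by
    rw [hAdef]; ring
  linarith

set_option maxHeartbeats 2000000 in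
/-- **Fourier-truncation error for Gevrey-regular potentials.** Suppose
`V₁(x,t) = Σ_{j,n} V̂₁(j,n) e^{i(jx+nt/T)}` is `2π`-periodic in `x` and
`2πT`-periodic in `t` with `|V̂₁(j,n)| ≤ C e^{−c|j|}` for `|j| ≥ (log T)^δ` and
`|V̂₁(j,n)| ≤ C e^{−c|n/T|^{1/α}}` for `|n| ≥ T(log T)^δ` (`α > 1`, `δ > 0`), and
`V₂` is the truncation of `V₁` to `|j| ≤ (log T)^σ`, `|n| ≤ T(log T)^σ` with
`σ > σ' > 2α + δ`. Then `‖V₁ − V₂‖_∞ ≤ e^{−(log T)^{σ'/α}}` for `T` large. -/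
theorem fourier_truncation_error
    (C c α δ σ σ' : ℝ) (hC : 0 < C) (hc : 0 < c) (hα : 1 < α) (hδ : 0 < δ)
    (hσ' : 2 * α + δ < σ') (hσ : σ' < σ) :
    ∃ T₀ : ℝ, ∀ T : ℝ, T₀ ≤ T →
      ∀ Vh : ℤ × ℤ → ℂ,
        Summable (fun p : ℤ × ℤ => ‖Vh p‖) →
        (∀ j n : ℤ, (Real.log T) ^ δ ≤ |(j : ℝ)| →
          ‖Vh (j, n)‖ ≤ C * Real.exp (-c * |(j : ℝ)|)) →
        (∀ j n : ℤ, T * (Real.log T) ^ δ ≤ |(n : ℝ)| →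
          ‖Vh (j, n)‖ ≤ C * Real.exp (-c * (|(n : ℝ)| / T) ^ (1 / α))) →
        ∀ x t : ℝ,
          ‖(∑' p : ℤ × ℤ, Vh p * Complex.exp (Complex.I * (p.1 * x + p.2 * t / T)))
            - (∑' p : ℤ × ℤ,
                (if |(p.1 : ℝ)| ≤ (Real.log T) ^ σ ∧ |(p.2 : ℝ)| ≤ T * (Real.log T) ^ σ
                  then Vh p else 0) * Complex.exp (Complex.I * (p.1 * x + p.2 * t / T)))‖
          ≤ Real.exp (-(Real.log T) ^ (σ' / α)) := by
  have hα0 : (0 < α) := by linarith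
  have hσ'0 : 0 < σ' := by nlinarith
  have hσ0 : 0 < σ := by linarith
  set Dbig : ℝ := 2*(8/min ((c/2)^2) 1) + 2*(2 + 2*Real.exp (2*α*Real.log (4*α/(c/2))))
          + (8/min ((c/4)^2) 1)*(2 + 2*Real.exp (2*α*Real.log (4*α/(c/4)))) with hDdef
  have hD0 : 0 < Dbig := by
    have h1 : (0:ℝ) < 8/min ((c/2)^2) 1 := div_pos (by norm_num) (lt_min (by positivity) one_pos)
    have h2 : (0:ℝ) < 8/min ((c/4)^2) 1 := div_pos (by norm_num) (lt_min (by positivity) one_pos)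
    have h3 : (0:ℝ) < 2 + 2*Real.exp (2*α*Real.log (4*α/(c/2))) := by positivity
    have h4 : (0:ℝ) < 2 + 2*Real.exp (2*α*Real.log (4*α/(c/4))) := by positivity
    rw [hDdef]; positivity
  set E : ℝ := Real.log (576*C*Dbig) with hEdef
  set R₁ : ℝ := (max ((4/c)*(|E|+3+2*δ)) 1)^(α/(σ-σ')) with hR₁def
  refine ⟨Real.exp (max 1 R₁), ?_⟩
  intro T hT Vh hVsum hj hn x t
  have hT1 : 1 ≤ T := by
    calc (1:ℝ) ≤ Real.exp 1 := by nlinarith [Real.add_one_le_exp (1:ℝ)]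
      _ ≤ Real.exp (max 1 R₁) := Real.exp_le_exp.mpr (le_max_left _ _)
      _ ≤ T := hT
  have hT0 : 0 < T := by linarith
  set L : ℝ := Real.log T with hLdef
  have hLmax : max 1 R₁ ≤ L := by
    rw [hLdef, ← Real.log_exp (max 1 R₁)]
    exact Real.log_le_log (Real.exp_pos _) hT
  have hL1 : 1 ≤ L := le_trans (le_max_left _ _) hLmax
  have hL0 : 0 < L := by linarith
  have hLR₁ : R₁ ≤ L := le_trans (le_max_right _ _) hLmax
  have hLδ1 : 1 ≤ L^δ := Real.one_le_rpow hL1 hδ.le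
  set Λ : ℝ := C * Dbig * (T*L^δ)^2 * Real.exp (-(c/4*L^(σ/α))) with hΛdef
  have hΛ0 : 0 < Λ := by rw [hΛdef]; positivity
  -- norm-one oscillating factor
  have hnorme : ∀ p : ℤ × ℤ,
      ‖Complex.exp (Complex.I * ((p.1 : ℂ) * (x:ℂ) + (p.2:ℂ) * (t:ℂ) / (T:ℂ)))‖ = 1 := by
    intro p
    have hz : (Complex.I * ((p.1 : ℂ) * (x:ℂ) + (p.2:ℂ) * (t:ℂ) / (T:ℂ)))
        = (((p.1:ℝ)*x + (p.2:ℝ)*t/T : ℝ):ℂ) * Complex.I := by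
      push_cast; ring
    rw [hz, Complex.norm_exp_ofReal_mul_I]
  -- shorthand
  set e : ℤ × ℤ → ℂ := fun p => Complex.exp (Complex.I * ((p.1 : ℂ) * (x:ℂ) + (p.2:ℂ) * (t:ℂ) / (T:ℂ))) with hedef
  set W : ℤ × ℤ → ℂ := fun p =>
    (if |(p.1 : ℝ)| ≤ L ^ σ ∧ |(p.2 : ℝ)| ≤ T * L ^ σ then Vh p else 0) with hWdef
  have hWle : ∀ p, ‖W p‖ ≤ ‖Vh p‖ := by
    intro p
    rw [hWdef]
    by_cases h : |(p.1 : ℝ)| ≤ L ^ σ ∧ |(p.2 : ℝ)| ≤ T * L ^ σ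
    · simp [h]
    · simp [h]
  have hdle : ∀ p, ‖Vh p - W p‖ ≤ ‖Vh p‖ := by
    intro p
    rw [hWdef]
    by_cases h : |(p.1 : ℝ)| ≤ L ^ σ ∧ |(p.2 : ℝ)| ≤ T * L ^ σ
    · simp [h]
    · simp [h]
  have hs1 : Summable (fun p : ℤ×ℤ => Vh p * e p) := by
    apply Summable.of_norm
    apply Summable.congr hVsum
    intro p
    rw [norm_mul, hnorme p, mul_one]
  have hs2 : Summable (fun p : ℤ×ℤ => W p * e p) := by
    apply Summable.of_norm
    apply Summable.of_nonneg_of_le (fun p => norm_nonneg _) _ hVsum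
    intro p
    rw [norm_mul, hnorme p, mul_one]
    exact hWle p
  have hkey : (∑' p : ℤ×ℤ, Vh p * e p) - (∑' p : ℤ×ℤ, W p * e p)
      = ∑' p : ℤ×ℤ, (Vh p - W p) * e p := by
    rw [← Summable.tsum_sub hs1 hs2]
    exact tsum_congr (fun p => by ring)
  -- summability of the norms of the difference
  have hsd : Summable (fun p : ℤ×ℤ => ‖(Vh p - W p) * e p‖) := by
    apply Summable.of_nonneg_of_le (fun p => norm_nonneg _) _ hVsum
    intro p
    rw [norm_mul, hnorme p, mul_one]
    exact hdle p
  obtain ⟨hsint, hbint⟩ := aux_int_sum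
  have hfpos : ∀ k : ℤ, 0 ≤ 1/(((k:ℝ))^2+1) := fun k => by positivity
  have hsprod : Summable (fun p : ℤ×ℤ => (1/((p.1:ℝ)^2+1)) * (1/((p.2:ℝ)^2+1))) :=
    Summable.mul_of_nonneg hsint hsint hfpos hfpos
  have hsG : Summable (fun p : ℤ×ℤ => Λ * ((1/((p.1:ℝ)^2+1)) * (1/((p.2:ℝ)^2+1)))) :=
    hsprod.mul_left Λ
  -- pointwise bound
  have hptw : ∀ p : ℤ×ℤ, ‖(Vh p - W p) * e p‖ ≤
      Λ * ((1/((p.1:ℝ)^2+1)) * (1/((p.2:ℝ)^2+1))) := by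
    intro p
    rw [norm_mul, hnorme p, mul_one]
    by_cases h : |(p.1 : ℝ)| ≤ L ^ σ ∧ |(p.2 : ℝ)| ≤ T * L ^ σ
    · have hz : Vh p - W p = 0 := by rw [hWdef]; simp [h]
      rw [hz, norm_zero]
      positivity
    · have hne : Vh p - W p = Vh p := by rw [hWdef]; simp [h]
      rw [hne]
      obtain ⟨j, n⟩ := p
      have hbig : L^σ < |(j:ℝ)| ∨ T*L^σ < |(n:ℝ)| := by
        by_contra hcon
        push_neg at hcon
        exact h ⟨hcon.1, hcon.2⟩
      have := aux_pointwise C c α δ σ T L (‖Vh (j,n)‖) (|(j:ℝ)|) (|(n:ℝ)|)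
        hC hc hα hδ (by linarith) hT1 hL1 (abs_nonneg _) (abs_nonneg _) (norm_nonneg _)
        (fun hh => by simpa [neg_mul] using hj j n hh)
        (fun hh => by simpa [neg_mul] using hn j n hh)
        hbig
      calc ‖Vh (j,n)‖ ≤ C * Dbig * (T*L^δ)^2 * Real.exp (-(c/4*L^(σ/α)))
            * ((1/(|(j:ℝ)|^2+1)) * (1/(|(n:ℝ)|^2+1))) := by
            rw [hDdef]; exact this
        _ = Λ * ((1/(((j:ℤ):ℝ)^2+1)) * (1/(((n:ℤ):ℝ)^2+1))) := by
            rw [hΛdef, sq_abs, sq_abs]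
  -- sum up
  have hsum1 : (∑' p : ℤ×ℤ, ‖(Vh p - W p) * e p‖) ≤
      ∑' p : ℤ×ℤ, Λ * ((1/((p.1:ℝ)^2+1)) * (1/((p.2:ℝ)^2+1))) :=
    Summable.tsum_le_tsum hptw hsd hsG
  have hprodeq : (∑' p : ℤ×ℤ, (1/((p.1:ℝ)^2+1)) * (1/((p.2:ℝ)^2+1)))
      = (∑' k:ℤ, 1/(((k:ℝ))^2+1)) * (∑' k:ℤ, 1/(((k:ℝ))^2+1)) := by
    rw [Summable.tsum_prod' hsprod (fun b => hsint.mul_left (1/((b:ℝ)^2+1)))]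
    calc (∑' (a : ℤ), ∑' (b : ℤ), (1/((a:ℝ)^2+1)) * (1/((b:ℝ)^2+1)))
        = ∑' (a : ℤ), (1/((a:ℝ)^2+1)) * (∑' k:ℤ, 1/(((k:ℝ))^2+1)) := by
          exact tsum_congr (fun a => tsum_mul_left)
      _ = (∑' k:ℤ, 1/(((k:ℝ))^2+1)) * (∑' k:ℤ, 1/(((k:ℝ))^2+1)) := tsum_mul_right
  have hS0 : 0 ≤ (∑' k:ℤ, 1/(((k:ℝ))^2+1)) := tsum_nonneg hfpos
  have hsum2 : (∑' p : ℤ×ℤ, Λ * ((1/((p.1:ℝ)^2+1)) * (1/((p.2:ℝ)^2+1)))) ≤ Λ * 576 := by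
    rw [tsum_mul_left, hprodeq]
    apply mul_le_mul_of_nonneg_left _ hΛ0.le
    calc (∑' k:ℤ, 1/(((k:ℝ))^2+1)) * (∑' k:ℤ, 1/(((k:ℝ))^2+1)) ≤ 24*24 :=
          mul_le_mul hbint hbint hS0 (by norm_num)
      _ = 576 := by norm_num
  -- final numeric estimate
  have hfinal : Λ * 576 ≤ Real.exp (-(L^(σ'/α))) := by
    have hCD : (0:ℝ) < 576*C*Dbig := by positivity
    have hexpE : 576*C*Dbig = Real.exp E := (Real.exp_log hCD).symm
    have hTexp : T = Real.exp L := (Real.exp_log hT0).symm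
    have hLδexp : L^δ = Real.exp (Real.log L * δ) := Real.rpow_def_of_pos hL0 δ
    have hlogL : Real.log L ≤ L := by
      have := Real.log_le_sub_one_of_pos hL0; linarith
    have hTL2 : (T*L^δ)^2 ≤ Real.exp ((2+2*δ)*L) := by
      rw [hTexp, hLδexp, ← Real.exp_add, sq, ← Real.exp_add]
      apply Real.exp_le_exp.mpr
      have : Real.log L * δ ≤ L * δ := mul_le_mul_of_nonneg_right hlogL hδ.le
      nlinarith
    have hEfin : E + (2+2*δ)*L + L^(σ'/α) ≤ c/4*L^(σ/α) :=
      aux_final c α δ σ σ' E L hc hα hδ hσ' hσ hL1 (by rw [← hR₁def]; exact hLR₁)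
    calc Λ * 576 = Real.exp E * (T*L^δ)^2 * Real.exp (-(c/4*L^(σ/α))) := by
          rw [hΛdef, ← hexpE]; ring
      _ ≤ Real.exp E * Real.exp ((2+2*δ)*L) * Real.exp (-(c/4*L^(σ/α))) := by
          apply mul_le_mul_of_nonneg_right _ (Real.exp_pos _).le
          exact mul_le_mul_of_nonneg_left hTL2 (Real.exp_pos _).le
      _ = Real.exp (E + (2+2*δ)*L + -(c/4*L^(σ/α))) := by
          rw [← Real.exp_add, ← Real.exp_add]
      _ ≤ Real.exp (-(L^(σ'/α))) := Real.exp_le_exp.mpr (by linarith)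
  -- conclude
  rw [hkey]
  calc ‖∑' p : ℤ×ℤ, (Vh p - W p) * e p‖ ≤ ∑' p : ℤ×ℤ, ‖(Vh p - W p) * e p‖ :=
        norm_tsum_le_tsum_norm hsd
    _ ≤ Λ * 576 := le_trans hsum1 hsum2
    _ ≤ Real.exp (-(L^(σ'/α))) := hfinal
end
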